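/- arXiv:2209.11529 — 3 statements merged into one kernel-verified Lean document; each statement's English description precedes it below -/
import Mathlib

section
/- Let T be a bisectorial operator in a Hilbert space H with closed range. Then for all t ≥ 1 and u ∈ H, ‖tT(I+t²T²)^{-1}u‖ ≲ t^{-1}‖u‖, and consequently ∫₁^∞ ‖tT(I+t²T²)^{-1}u‖² dt/t ≲ ‖u‖². -/
open MeasureTheory Set
noncomputable section

/-- A (closed, densely defined) bisectorial operator in a Hilbert space `H`, encoded via its
dense domain, closed graph, and the uniformly bounded resolvents `R t = (I + i t T)⁻¹`,
`t ∈ ℝ` (uniform bounds on the resolvents along the imaginary axis are equivalent to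
bisectoriality). -/
structure BisectorialOp (H : Type*) [NormedAddCommGroup H] [InnerProductSpace ℂ H]
    [CompleteSpace H] where
  T : H →ₗ.[ℂ] H
  dense_dom : Dense (T.domain : Set H)
  closed_graph : IsClosed (T.graph : Set (H × H))
  /-- the resolvents `R t = (I + i t T)⁻¹` -/
  R : ℝ → H →L[ℂ] H
  bound : ℝ
  hR_mem : ∀ (t : ℝ) (x : H), ∃ h : R t x ∈ T.domain,
    R t x + (Complex.I * (t : ℂ)) • T ⟨R t x, h⟩ = x
  hR_inv : ∀ (t : ℝ) (y : T.domain), R t ((y : H) + (Complex.I * (t : ℂ)) • T y) = y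
  hR_bound : ∀ t : ℝ, ‖R t‖ ≤ bound

/-- `ψ_t(T) = tT(I + t²T²)⁻¹ = ((I + itT)⁻¹ - (I - itT)⁻¹)/(2i)`. -/
def BisectorialOp.psi {H : Type*} [NormedAddCommGroup H] [InnerProductSpace ℂ H]
    [CompleteSpace H] (S : BisectorialOp H) (t : ℝ) : H →L[ℂ] H :=
  (2 * Complex.I)⁻¹ • (S.R (-t) - S.R t)

/-!
Put `a = (I + itT)⁻¹u` and `b = (I - itT)⁻¹u`. Then `ψ_t(T)u = (b - a)/(2i) = T((t/2)(a + b))` lies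
in `Ran T ∩ Dom T`, and `t Tψ_t(T)u = u - (a + b)/2` has norm `≲ ‖u‖`. On `Ran T ∩ Dom T` we have
`‖p‖ ≲ ‖Tp‖`: by the open mapping theorem `p = Tq` with `‖q‖ ≲ ‖p‖`, so
`‖(I + isT)⁻¹p‖ = ‖(I + isT)⁻¹Tq‖ ≲ ‖q‖/s ≤ ‖p‖/2` for one large `s`, and
`p = (I + isT)⁻¹p + is(I + isT)⁻¹Tp`. Hence `‖ψ_t(T)u‖ ≲ t⁻¹‖u‖`, and the square function bound
follows from `∫₁^∞ t⁻³ dt = 1/2`.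
-/

theorem LinearPMap.exists_preimage_norm_le_of_isClosed_range {𝕜 E F : Type*}
    [NontriviallyNormedField 𝕜] [NormedAddCommGroup E] [NormedSpace 𝕜 E] [CompleteSpace E]
    [NormedAddCommGroup F] [NormedSpace 𝕜 F] [CompleteSpace F]
    (T : E →ₗ.[𝕜] F) (hgraph : T.IsClosed)
    (hrange : _root_.IsClosed (Set.range fun x : T.domain => T x)) :
    ∃ c > 0, ∀ x : T.domain, ∃ q : T.domain, T q = T x ∧ ‖(q : E)‖ ≤ c * ‖T x‖ := by
  let K := LinearMap.range T.toFun
  have : CompleteSpace T.graph := hgraph.completeSpace_coe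
  have : CompleteSpace K := hrange.completeSpace_coe
  have hsnd : ∀ g : T.graph, (g : E × F).2 ∈ K := fun g => by
    obtain ⟨y, -, hy⟩ := T.mem_graph_iff.1 g.2
    exact ⟨y, hy⟩
  let f : T.graph →L[𝕜] K :=
    ((ContinuousLinearMap.snd 𝕜 E F).comp T.graph.subtypeL).codRestrict K hsnd
  have hsurj : Function.Surjective f := by
    rintro ⟨-, x, rfl⟩
    exact ⟨⟨(x, T x), T.mem_graph x⟩, rfl⟩
  obtain ⟨c, hc0, hc⟩ := f.exists_preimage_norm_le hsurj
  refine ⟨c, hc0, fun x => ?_⟩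
  obtain ⟨g, hgx, hg⟩ := hc ⟨T x, x, rfl⟩
  obtain ⟨q, hq, hTq⟩ := T.mem_graph_iff.1 g.2
  refine ⟨q, hTq.trans (congrArg Subtype.val hgx), ?_⟩
  calc ‖(q : E)‖ = ‖(g : E × F).1‖ := by rw [hq]
    _ ≤ ‖g‖ := norm_fst_le (g : E × F)
    _ ≤ c * ‖T x‖ := hg

theorem lintegral_Ioi_one_norm_sq_div_le {E : Type*} [NormedAddCommGroup E] {f : ℝ → E} {K : ℝ}
    (hf : ∀ t, 1 < t → ‖f t‖ ≤ K * t⁻¹) :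
    ∫⁻ t in Ioi 1, ENNReal.ofReal (‖f t‖ ^ 2 / t) ≤ ENNReal.ofReal (K ^ 2 / 2) :=
  calc ∫⁻ t in Ioi 1, ENNReal.ofReal (‖f t‖ ^ 2 / t)
      ≤ ∫⁻ t in Ioi 1, ENNReal.ofReal (K ^ 2 * t ^ (-3 : ℝ)) := by
        refine setLIntegral_mono' measurableSet_Ioi fun t (ht : 1 < t) => ?_
        have ht0 : 0 < t := one_pos.trans ht
        rw [Real.rpow_neg ht0.le, Real.rpow_ofNat]
        gcongr
        calc ‖f t‖ ^ 2 / t ≤ (K * t⁻¹) ^ 2 / t := by gcongr; exact hf t ht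
          _ = K ^ 2 * (t ^ 3)⁻¹ := by field_simp
    _ = ENNReal.ofReal (K ^ 2 / 2) := by
        rw [← ofReal_integral_eq_lintegral_ofReal, integral_const_mul,
          integral_Ioi_rpow_of_lt (by norm_num) one_pos]
        · norm_num [div_eq_mul_inv]
        · exact (integrableOn_Ioi_rpow_of_lt (by norm_num) one_pos).const_mul _
        · filter_upwards [ae_restrict_mem measurableSet_Ioi] with t (ht : 1 < t)
          have := one_pos.trans ht
          positivity

namespace BisectorialOp

open Complex

variable {H : Type*} [NormedAddCommGroup H] [InnerProductSpace ℂ H] [CompleteSpace H]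
  (S : BisectorialOp H)

theorem bound_nonneg : 0 ≤ S.bound := (norm_nonneg _).trans (S.hR_bound 0)

theorem norm_R_apply_le (s : ℝ) (x : H) : ‖S.R s x‖ ≤ S.bound * ‖x‖ :=
  (S.R s).le_of_opNorm_le (S.hR_bound s) x

theorem R_add_smul_R_T (s : ℝ) (x : S.T.domain) :
    S.R s x + (I * s) • S.R s (S.T x) = x := by
  simpa only [map_add, map_smul] using S.hR_inv s x

theorem abs_mul_norm_R_T_le (s : ℝ) (x : S.T.domain) :
    |s| * ‖S.R s (S.T x)‖ ≤ (1 + S.bound) * ‖(x : H)‖ :=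
  calc |s| * ‖S.R s (S.T x)‖ = ‖(I * s) • S.R s (S.T x)‖ := by simp [norm_smul]
    _ = ‖(x : H) - S.R s x‖ := by rw [eq_sub_iff_add_eq'.2 (S.R_add_smul_R_T s x)]
    _ ≤ ‖(x : H)‖ + S.bound * ‖(x : H)‖ :=
      (norm_sub_le _ _).trans (by gcongr; exact S.norm_R_apply_le _ _)
    _ = (1 + S.bound) * ‖(x : H)‖ := by ring

theorem norm_le_norm_R_add (s : ℝ) (x : S.T.domain) :
    ‖(x : H)‖ ≤ ‖S.R s x‖ + |s| * S.bound * ‖S.T x‖ :=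
  calc ‖(x : H)‖ = ‖S.R s x + (I * s) • S.R s (S.T x)‖ := by rw [S.R_add_smul_R_T]
    _ ≤ ‖S.R s x‖ + |s| * ‖S.R s (S.T x)‖ := by
      simpa [norm_smul] using norm_add_le (S.R s x) ((I * s) • S.R s (S.T x))
    _ ≤ ‖S.R s x‖ + |s| * S.bound * ‖S.T x‖ := by
      rw [mul_assoc]; gcongr; exact S.norm_R_apply_le _ _

theorem exists_norm_le_norm_T_of_mem_range
    (hclosed : IsClosed (Set.range fun x : S.T.domain => S.T x)) :
    ∃ C > 0, ∀ p q : S.T.domain, (p : H) = S.T q → ‖(p : H)‖ ≤ C * ‖S.T p‖ := by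
  obtain ⟨c, hc0, hc⟩ := S.T.exists_preimage_norm_le_of_isClosed_range S.closed_graph hclosed
  have hB := S.bound_nonneg
  set s := 2 * c * (1 + S.bound)
  have hs : 0 < s := by positivity
  refine ⟨2 * s * (1 + S.bound), by positivity, fun p q hpq => ?_⟩
  obtain ⟨q', hq'T, hq'⟩ := hc q
  rw [← hpq] at hq'T hq'
  have hRp : ‖S.R s p‖ ≤ ‖(p : H)‖ / 2 := by
    refine le_of_mul_le_mul_left ?_ hs
    calc s * ‖S.R s p‖ = |s| * ‖S.R s (S.T q')‖ := by rw [hq'T, abs_of_pos hs]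
      _ ≤ (1 + S.bound) * ‖(q' : H)‖ := S.abs_mul_norm_R_T_le s q'
      _ ≤ (1 + S.bound) * (c * ‖(p : H)‖) := by gcongr
      _ = s * (‖(p : H)‖ / 2) := by ring
  have hTp : |s| * S.bound * ‖S.T p‖ ≤ s * (1 + S.bound) * ‖S.T p‖ := by
    rw [abs_of_pos hs]; gcongr; linarith
  linarith [S.norm_le_norm_R_add s p]

def resolventDom (s : ℝ) (x : H) : S.T.domain := ⟨S.R s x, (S.hR_mem s x).1⟩

theorem resolventDom_add_smul_T (s : ℝ) (x : H) :
    (S.resolventDom s x : H) + (I * s) • S.T (S.resolventDom s x) = x :=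
  (S.hR_mem s x).2

def psiDomain (t : ℝ) (u : H) : S.T.domain :=
  (2 * I)⁻¹ • (S.resolventDom (-t) u - S.resolventDom t u)

theorem coe_psiDomain (t : ℝ) (u : H) : (S.psiDomain t u : H) = S.psi t u := by
  simp [psiDomain, psi, resolventDom]

theorem psiDomain_eq_T (t : ℝ) (u : H) :
    (S.psiDomain t u : H) =
      S.T (((t : ℂ) / 2) • (S.resolventDom t u + S.resolventDom (-t) u)) := by
  have ha := S.resolventDom_add_smul_T t u
  have hb := S.resolventDom_add_smul_T (-t) u
  rw [psiDomain, LinearPMap.map_smul, LinearPMap.map_add]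
  push_cast at hb ⊢
  linear_combination (norm := skip) (2 * I)⁻¹ • (hb - ha)
  match_scalars <;> field_simp <;> ring_nf

theorem smul_T_psiDomain (t : ℝ) (u : H) :
    (t : ℂ) • S.T (S.psiDomain t u) =
      u - (2 : ℂ)⁻¹ • ((S.resolventDom t u : H) + S.resolventDom (-t) u) := by
  have ha := S.resolventDom_add_smul_T t u
  have hb := S.resolventDom_add_smul_T (-t) u
  rw [psiDomain, LinearPMap.map_smul, LinearPMap.map_sub]
  push_cast at hb ⊢
  linear_combination (norm := skip) (2 : ℂ)⁻¹ • (ha + hb)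
  match_scalars <;> field_simp <;> ring_nf <;> rw [I_sq] <;> ring

theorem abs_mul_norm_T_psiDomain_le (t : ℝ) (u : H) :
    |t| * ‖S.T (S.psiDomain t u)‖ ≤ (1 + S.bound) * ‖u‖ :=
  calc |t| * ‖S.T (S.psiDomain t u)‖ = ‖(t : ℂ) • S.T (S.psiDomain t u)‖ := by simp [norm_smul]
    _ ≤ ‖u‖ + 2⁻¹ * (S.bound * ‖u‖ + S.bound * ‖u‖) := by
      rw [smul_T_psiDomain]
      refine (norm_sub_le _ _).trans ?_
      simp only [norm_smul, norm_inv, norm_ofNat]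
      gcongr
      exact (norm_add_le _ _).trans (add_le_add (S.norm_R_apply_le _ _) (S.norm_R_apply_le _ _))
    _ = (1 + S.bound) * ‖u‖ := by ring

theorem exists_norm_psi_le (hclosed : IsClosed (Set.range fun x : S.T.domain => S.T x)) :
    ∃ C > 0, ∀ t > 0, ∀ u : H, ‖S.psi t u‖ ≤ C * t⁻¹ * ‖u‖ := by
  obtain ⟨c, hc0, hc⟩ := S.exists_norm_le_norm_T_of_mem_range hclosed
  have hB := S.bound_nonneg
  refine ⟨c * (1 + S.bound), by positivity, fun t ht u => ?_⟩
  have hT : t * ‖S.T (S.psiDomain t u)‖ ≤ (1 + S.bound) * ‖u‖ := by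
    simpa only [abs_of_pos ht] using S.abs_mul_norm_T_psiDomain_le t u
  calc ‖S.psi t u‖ = ‖(S.psiDomain t u : H)‖ := by rw [coe_psiDomain]
    _ ≤ c * ‖S.T (S.psiDomain t u)‖ := hc _ _ (S.psiDomain_eq_T t u)
    _ ≤ c * ((1 + S.bound) * ‖u‖ / t) := by gcongr; rwa [le_div_iff₀ ht, mul_comm]
    _ = c * (1 + S.bound) * t⁻¹ * ‖u‖ := by ring

end BisectorialOp

/-- If `T` is bisectorial with closed range, then for all `t ≥ 1` and `u ∈ H` we
have `‖tT(I+t²T²)⁻¹u‖ ≲ t⁻¹‖u‖`, and consequently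
`∫₁^∞ ‖tT(I+t²T²)⁻¹u‖² dt/t ≲ ‖u‖²`. -/
theorem bisectorial_closed_range_large_time
    {H : Type*} [NormedAddCommGroup H] [InnerProductSpace ℂ H] [CompleteSpace H]
    (S : BisectorialOp H)
    (hclosed : IsClosed (Set.range fun x : S.T.domain => S.T x)) :
    ∃ C : ℝ, 0 < C ∧
      (∀ t : ℝ, 1 ≤ t → ∀ u : H, ‖S.psi t u‖ ≤ C * t⁻¹ * ‖u‖) ∧
      (∀ u : H, ∫⁻ t in Set.Ioi (1 : ℝ), ENNReal.ofReal (‖S.psi t u‖ ^ 2 / t)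
        ≤ ENNReal.ofReal (C * ‖u‖ ^ 2)) := by
  obtain ⟨C, hC0, hC⟩ := S.exists_norm_psi_le hclosed
  refine ⟨max C (C ^ 2 / 2), lt_max_of_lt_left hC0, fun t ht u => ?_, fun u => ?_⟩
  · refine (hC t (by linarith) u).trans ?_
    have : 0 ≤ t⁻¹ := by positivity
    gcongr
    exact le_max_left _ _
  · calc ∫⁻ t in Ioi 1, ENNReal.ofReal (‖S.psi t u‖ ^ 2 / t)
        ≤ ENNReal.ofReal ((C * ‖u‖) ^ 2 / 2) :=
          lintegral_Ioi_one_norm_sq_div_le fun t ht =>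
            (hC t (by linarith) u).trans_eq (by ring)
      _ ≤ ENNReal.ofReal (max C (C ^ 2 / 2) * ‖u‖ ^ 2) := by
          gcongr
          rw [mul_pow, mul_div_right_comm]
          gcongr
          exact le_max_right _ _
end
end

section
/- Let ∇_M : W^{1,2}(M,ω₀) ⊂ L²(M,ω₀) → L²(TM,ω₀) be the weighted gradient on a closed Riemannian manifold M with ω₀ ∈ A₂(M), and div_{M,ω₀} = −(∇_M)* its negative adjoint. If ∇_M has a compact left Fredholm inverse (so Ran(∇_M) is closed), then the operator D₀ = [[0, div_{M,ω₀}],[−∇_M, 0]] on L²(M,ω₀) ⊕ L²(TM,ω₀) has closed range H = Ran(div_{M,ω₀}) ⊕ Ran(∇_M), and the restriction of D₀ to H has a compact inverse D₀^{-1} : H → H. -/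
/-!
The range of `S` is closed because on the finite-codimensional subspace `ker F` of its domain,
`T` is a genuine left inverse of `S`. Hence `S` has a bounded Moore–Penrose inverse `A` (closed
graph theorem): `A y` is the solution in `(ker S)ᗮ` of `S u = P y`, where `P` projects onto
`ran S`. From `T S = 1 + F` we get `A = T P - F A`, so `A` is compact, and so is `A†` by
Schauder's theorem. As `A (S u) = u` on `(ker S)ᗮ`, every `x ⊥ ker S` equals `S* (A† x)`, so
`ran S* = (ker S)ᗮ` is closed, and `A† (S* v) = v` for `v ∈ ran S`. The inverse of `D₀` on
`ran S* ⊕ ran S` is therefore `(x, y) ↦ -(A y, A† x)`.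
-/

open Metric Submodule
open scoped InnerProduct InnerProductSpace

theorem TotallyBounded.image_of_uniformlyControlled {α β γ : Type*} [PseudoMetricSpace β]
    [PseudoMetricSpace γ] {s : Set α} {f : α → β} {g : α → γ} (hg : TotallyBounded (g '' s))
    (hfg : ∀ ε > 0, ∃ δ > 0, ∀ x ∈ s, ∀ y ∈ s, dist (g x) (g y) < δ → dist (f x) (f y) < ε) :
    TotallyBounded (f '' s) := by
  refine totallyBounded_iff.mpr fun ε hε => ?_
  obtain ⟨δ, hδ, hfg⟩ := hfg ε hε
  obtain ⟨t, hts, htfin, hcover⟩ :=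
    Set.exists_subset_image_finite_and.mp (finite_approx_of_totallyBounded hg δ hδ)
  refine ⟨f '' t, htfin.image f, ?_⟩
  rintro _ ⟨y, hy, rfl⟩
  obtain ⟨_, ⟨z, hz, rfl⟩, hyz⟩ := Set.mem_iUnion₂.mp (hcover ⟨y, hy, rfl⟩)
  exact Set.mem_iUnion₂.mpr ⟨_, ⟨z, hz, rfl⟩, hfg y hy z (hts hz) hyz⟩

theorem IsCompactOperator.prodMk {M₁ M₂ M₃ : Type*} [Zero M₁] [TopologicalSpace M₁]
    [TopologicalSpace M₂] [TopologicalSpace M₃] {f : M₁ → M₂} {g : M₁ → M₃}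
    (hf : IsCompactOperator f) (hg : IsCompactOperator g) :
    IsCompactOperator fun x => (f x, g x) := by
  obtain ⟨K, hK, hfK⟩ := hf
  obtain ⟨L, hL, hgL⟩ := hg
  exact ⟨K ×ˢ L, hK.prod hL, Filter.inter_mem hfK hgL⟩

theorem ContinuousLinearMap.isCompactOperator_of_finiteDimensional_range {𝕜 E F : Type*}
    [NontriviallyNormedField 𝕜] [LocallyCompactSpace 𝕜] [NormedAddCommGroup E] [NormedSpace 𝕜 E]
    [NormedAddCommGroup F] [NormedSpace 𝕜 F] (f : E →L[𝕜] F)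
    [FiniteDimensional 𝕜 (LinearMap.range (f : E →ₗ[𝕜] F))] : IsCompactOperator f :=
  have := FiniteDimensional.proper 𝕜 (LinearMap.range (f : E →ₗ[𝕜] F))
  (isCompactOperator_of_locallyCompactSpace_dom f.rangeRestrict).continuous_comp
    continuous_subtype_val

section Adjoint

variable {𝕜 E F : Type*} [RCLike 𝕜]
  [NormedAddCommGroup E] [InnerProductSpace 𝕜 E] [CompleteSpace E]
  [NormedAddCommGroup F] [InnerProductSpace 𝕜 F] [CompleteSpace F]

open ContinuousLinearMap

theorem ContinuousLinearMap.norm_adjoint_apply_sq_le (A : E →L[𝕜] F) (y : F) :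
    ‖(A†) y‖ ^ 2 ≤ ‖y‖ * ‖A ((A†) y)‖ := by
  rw [apply_norm_sq_eq_inner_adjoint_right, adjoint_adjoint]
  exact (RCLike.re_le_norm _).trans (norm_inner_le_norm _ _)

theorem IsCompactOperator.adjoint {A : E →L[𝕜] F} (hA : IsCompactOperator A) :
    IsCompactOperator (A†) := by
  have hAA : TotallyBounded ((A ∘L A†) '' closedBall 0 1) := by
    have hc : IsCompactOperator (A ∘L A†) := hA.comp_clm (A†)
    exact (hc.isCompact_closure_image_closedBall 1).totallyBounded.subset subset_closure
  have htb : TotallyBounded ((A†) '' closedBall 0 1) := by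
    refine hAA.image_of_uniformlyControlled fun ε hε => ⟨ε ^ 2 / 2, by positivity, ?_⟩
    intro x hx y hy hxy
    rw [mem_closedBall_zero_iff] at hx hy
    rw [dist_eq_norm, comp_apply, comp_apply] at hxy
    rw [dist_eq_norm]
    have hsq := A.norm_adjoint_apply_sq_le (x - y)
    rw [map_sub, map_sub] at hsq
    refine lt_of_pow_lt_pow_left₀ 2 hε.le ?_
    -- `‖A† (x - y)‖² ≤ ‖x - y‖ ‖A A† (x - y)‖ < 2 (ε² / 2)`
    nlinarith [norm_sub_le x y, norm_nonneg (x - y), norm_nonneg (A ((A†) x) - A ((A†) y))]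
  exact (isCompactOperator_iff_isCompact_closure_image_closedBall (A† : F →ₗ[𝕜] E) zero_lt_one).mpr
    (htb.closure.isCompact_of_isClosed isClosed_closure)

end Adjoint

namespace LinearPMap

section Normed

variable {𝕜 E F : Type*} [NontriviallyNormedField 𝕜]
  [NormedAddCommGroup E] [NormedSpace 𝕜 E] [NormedAddCommGroup F] [NormedSpace 𝕜 F]

def ker (f : E →ₗ.[𝕜] F) : Submodule 𝕜 E := (LinearMap.ker f.toFun).map f.domain.subtype

theorem IsClosed.isClosed_ker {f : E →ₗ.[𝕜] F} (hf : f.IsClosed) :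
    _root_.IsClosed (f.ker : Set E) := by
  have : (f.ker : Set E) = (fun x => (x, (0 : F))) ⁻¹' (f.graph : Set (E × F)) := by
    ext x
    simp only [ker, SetLike.mem_coe, mem_map, LinearMap.mem_ker, Set.mem_preimage, mem_graph_iff]
    exact ⟨fun ⟨u, hu, hux⟩ => ⟨u, hux, hu⟩, fun ⟨u, hux, hu⟩ => ⟨u, hu, hux⟩⟩
  rw [this]
  exact hf.preimage (continuous_id.prodMk continuous_const)

theorem IsClosed.domRestrict {f : E →ₗ.[𝕜] F} (hf : f.IsClosed) {p : Submodule 𝕜 E}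
    (hp : _root_.IsClosed (p : Set E)) : (f.domRestrict p).IsClosed := by
  have : ((f.domRestrict p).graph : Set (E × F)) =
      (f.graph : Set (E × F)) ∩ Prod.fst ⁻¹' (p : Set E) := by
    ext ⟨x, y⟩
    simp only [SetLike.mem_coe, mem_graph_iff, Set.mem_inter_iff, Set.mem_preimage]
    constructor
    · rintro ⟨u, rfl, rfl⟩
      exact ⟨⟨⟨u, u.2.2⟩, rfl, (domRestrict_apply rfl).symm⟩, u.2.1⟩
    · rintro ⟨⟨u, rfl, rfl⟩, hu⟩
      exact ⟨⟨u, hu, u.2⟩, rfl, domRestrict_apply rfl⟩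
  rw [LinearPMap.IsClosed, this]
  exact hf.inter (hp.preimage continuous_fst)

theorem IsClosed.continuous [CompleteSpace F] {f : E →ₗ.[𝕜] F} (hf : f.IsClosed)
    [CompleteSpace f.domain] : Continuous f :=
  f.toFun.continuous_of_isClosed_graph <| by
    have : (f.toFun.graph : Set (f.domain × F)) =
        (fun p => ((p.1 : E), p.2)) ⁻¹' (f.graph : Set (E × F)) := by
      ext ⟨x, y⟩
      simp only [SetLike.mem_coe, LinearMap.mem_graph_iff, Set.mem_preimage, mem_graph_iff]
      exact ⟨fun h => ⟨x, rfl, h.symm⟩, fun ⟨u, hu, hy⟩ => by rw [← hy, Subtype.ext hu]; rfl⟩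
    rw [this]
    exact hf.preimage (continuous_subtype_val.prodMap continuous_id)

theorem IsClosed.isClosed_range_of_leftInverse_add_finiteRank [CompleteSpace 𝕜]
    {S : E →ₗ.[𝕜] F} (hS : S.IsClosed) (T : F →L[𝕜] E) (K : E →L[𝕜] E)
    [FiniteDimensional 𝕜 (LinearMap.range (K : E →ₗ[𝕜] E))]
    (hTS : ∀ u : S.domain, T (S u) = u + K u) :
    _root_.IsClosed (LinearMap.range S.toFun : Set F) := by
  set W := LinearMap.ker ((K : E →ₗ[𝕜] E) ∘ₗ S.domain.subtype)
  have : W.CoFG := range_fg_iff_ker_cofg.mp <|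
    (Module.Finite.iff_fg.mp inferInstance).of_le (LinearMap.range_comp_le_range _ _)
  refine LinearMap.isClosed_range_of_isClosed_map_of_finiteDimensional_quotient (s := W) ?_
  have hW : (W.map S.toFun : Set F) = (fun y => (T y, y)) ⁻¹' S.graph ∩ (K ∘ T) ⁻¹' {0} := by
    ext y
    simp only [Set.mem_inter_iff, Set.mem_preimage, SetLike.mem_coe, mem_map, mem_graph_iff]
    constructor
    · rintro ⟨u, hu, rfl⟩
      have hKu : K u = 0 := hu
      have hTu : T (S u) = u := by rw [hTS, hKu, add_zero]
      exact ⟨⟨u, hTu.symm, rfl⟩, by simp [hTu, hKu]⟩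
    · rintro ⟨⟨u, hu, rfl⟩, hK⟩
      refine ⟨u, ?_, rfl⟩
      show K u = 0
      simpa [hu] using hK
  rw [hW]
  exact (hS.preimage (T.continuous.prodMk continuous_id)).inter
    (isClosed_singleton.preimage (K.continuous.comp T.continuous))

end Normed

section Hilbert

variable {𝕜 E F : Type*} [RCLike 𝕜] [NormedAddCommGroup E] [InnerProductSpace 𝕜 E]
  [NormedAddCommGroup F] [InnerProductSpace 𝕜 F]

def IsMoorePenroseInverse (S : E →ₗ.[𝕜] F) [CompleteSpace (LinearMap.range S.toFun)]
    (A : F →L[𝕜] E) : Prop :=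
  ∀ y, ∃ u : S.domain,
    (u : E) = A y ∧ (u : E) ∈ S.kerᗮ ∧ S u = (LinearMap.range S.toFun).starProjection y

theorem ker_domRestrict_orthogonal_ker (S : E →ₗ.[𝕜] F) :
    LinearMap.ker (S.domRestrict S.kerᗮ).toFun = ⊥ := by
  refine LinearMap.ker_eq_bot'.mpr fun x hx => Subtype.ext ?_
  have hxS : (x : E) ∈ S.ker := ⟨⟨x, x.2.2⟩, (domRestrict_apply rfl).symm.trans hx, rfl⟩
  exact Submodule.disjoint_def.mp S.ker.orthogonal_disjoint _ hxS x.2.1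

theorem IsClosed.range_domRestrict_orthogonal_ker [CompleteSpace E] {S : E →ₗ.[𝕜] F}
    (hS : S.IsClosed) :
    LinearMap.range (S.domRestrict S.kerᗮ).toFun = LinearMap.range S.toFun := by
  have : CompleteSpace S.ker := hS.isClosed_ker.completeSpace_coe
  refine le_antisymm ?_ ?_
  · rintro _ ⟨x, rfl⟩
    exact ⟨⟨x, x.2.2⟩, (domRestrict_apply rfl).symm⟩
  · rintro _ ⟨u, rfl⟩
    obtain ⟨w, hw, hwu⟩ := S.ker.starProjection_apply_mem u
    have hperp : ((u - w : S.domain) : E) ∈ S.kerᗮ := by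
      rw [Submodule.coe_sub, show (w : E) = _ from hwu]
      exact S.ker.sub_starProjection_mem_orthogonal (u : E)
    refine ⟨⟨_, hperp, (u - w).2⟩, (domRestrict_apply (y := u - w) rfl).trans ?_⟩
    rw [map_sub, show S w = 0 from hw, sub_zero]
    rfl

theorem IsClosed.exists_isMoorePenroseInverse [CompleteSpace E] {S : E →ₗ.[𝕜] F}
    (hS : S.IsClosed) [CompleteSpace (LinearMap.range S.toFun)] :
    ∃ A : F →L[𝕜] E, S.IsMoorePenroseInverse A := by
  set S' := S.domRestrict S.kerᗮ
  have hinj := S.ker_domRestrict_orthogonal_ker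
  have hdom : S'.inverse.domain = LinearMap.range S.toFun :=
    inverse_domain.trans hS.range_domRestrict_orthogonal_ker
  have : CompleteSpace S'.inverse.domain := hdom ▸ inferInstance
  let A₀ : S'.inverse.domain →L[𝕜] E :=
    ⟨S'.inverse.toFun,
      ((inverse_closed_iff hinj).mpr (hS.domRestrict (isClosed_orthogonal S.ker))).continuous⟩
  let P := (LinearMap.range S.toFun).starProjection.codRestrict S'.inverse.domain
    fun y => by rw [hdom]; exact starProjection_apply_mem _ y
  refine ⟨A₀ ∘L P, fun y => ?_⟩
  obtain ⟨x, hx⟩ := (inverse_domain (f := S') ▸ (P y).2 : (P y : F) ∈ LinearMap.range S'.toFun)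
  exact ⟨⟨x, x.2.2⟩, (inverse_apply_eq hinj hx).symm, x.2.1, (domRestrict_apply rfl).symm.trans hx⟩

namespace IsMoorePenroseInverse

variable {S : E →ₗ.[𝕜] F} [CompleteSpace (LinearMap.range S.toFun)] {A : F →L[𝕜] E}

theorem sub_apply_mem_ker (hA : S.IsMoorePenroseInverse A) (u : S.domain) :
    (u : E) - A (S u) ∈ S.ker := by
  obtain ⟨w, hwA, -, hw⟩ := hA (S u)
  have hSw : S w = S u := hw.trans (starProjection_eq_self_iff.mpr ⟨u, rfl⟩)
  exact ⟨u - w, (LinearMap.map_sub _ u w).trans (sub_eq_zero.mpr hSw.symm), by simp [hwA]⟩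

theorem apply_eq (hA : S.IsMoorePenroseInverse A) {u : S.domain} (hu : (u : E) ∈ S.kerᗮ) :
    A (S u) = u := by
  obtain ⟨w, hwA, hw, -⟩ := hA (S u)
  have h := Submodule.disjoint_def.mp S.ker.orthogonal_disjoint _ (hA.sub_apply_mem_ker u)
    (S.kerᗮ.sub_mem hu (hwA ▸ hw))
  exact (sub_eq_zero.mp h).symm

theorem isCompactOperator (hA : S.IsMoorePenroseInverse A) {T : F →L[𝕜] E}
    (hT : IsCompactOperator T) (K : E →L[𝕜] E)
    [FiniteDimensional 𝕜 (LinearMap.range (K : E →ₗ[𝕜] E))]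
    (hTS : ∀ u : S.domain, T (S u) = u + K u) : IsCompactOperator A := by
  have hA_eq : ⇑A = ⇑(T ∘L (LinearMap.range S.toFun).starProjection) - ⇑(K ∘L A) := by
    funext y
    obtain ⟨u, hu, -, hSu⟩ := hA y
    rw [Pi.sub_apply, ContinuousLinearMap.comp_apply, ContinuousLinearMap.comp_apply, ← hSu, hTS,
      ← hu, add_sub_cancel_right]
  have : FiniteDimensional 𝕜 (LinearMap.range ((K ∘L A : F →L[𝕜] E) : F →ₗ[𝕜] E)) :=
    Submodule.finiteDimensional_of_le (LinearMap.range_comp_le_range _ _)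
  rw [hA_eq]
  exact (hT.comp_clm _).sub (K ∘L A).isCompactOperator_of_finiteDimensional_range

variable [CompleteSpace E] [CompleteSpace F]

theorem range_adjoint_eq (hS : Dense (S.domain : Set E)) (hA : S.IsMoorePenroseInverse A) :
    LinearMap.range S.adjoint.toFun = S.kerᗮ := by
  refine le_antisymm ?_ fun x hx => ?_
  · rintro _ ⟨v, rfl⟩
    refine (mem_orthogonal' _ _).mpr ?_
    rintro _ ⟨w, hw, rfl⟩
    refine (adjoint_isFormalAdjoint hS v w).trans ?_
    rw [show S w = 0 from hw, inner_zero_right]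
  · have hx' : ∀ u : S.domain, ⟪x, (u : E)⟫_𝕜 = ⟪(A†) x, S u⟫_𝕜 := by
      intro u
      rw [ContinuousLinearMap.adjoint_inner_left, ← sub_eq_zero, ← inner_sub_right]
      exact inner_left_of_mem_orthogonal (hA.sub_apply_mem_ker u) hx
    exact ⟨⟨(A†) x, mem_adjoint_domain_of_exists _ ⟨x, hx'⟩⟩, adjoint_apply_eq hS _ hx'⟩

theorem adjoint_apply_adjoint_apply (hS : Dense (S.domain : Set E))
    (hA : S.IsMoorePenroseInverse A) (v : S.adjoint.domain)
    (hv : (v : F) ∈ LinearMap.range S.toFun) : (A†) (S.adjoint v) = v := by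
  refine ext_inner_right 𝕜 fun y => ?_
  obtain ⟨u, hu, -, hSu⟩ := hA y
  rw [ContinuousLinearMap.adjoint_inner_left, ← hu, adjoint_isFormalAdjoint hS v u, hSu,
    ← inner_starProjection_left_eq_right, starProjection_eq_self_iff.mpr hv]

end IsMoorePenroseInverse

end Hilbert

end LinearPMap

/-- Abstract form of Proposition on compact resolvents. Let
`S = ∇_M : W^{1,2}(M,ω₀) ⊂ L²(M,ω₀) → L²(TM,ω₀)` be a closed densely defined operator
(`H₁ = L²(M,ω₀)`, `H₂ = L²(TM,ω₀)`) and `div_{M,ω₀} = −S*`. If `S` has a compact left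
Fredholm inverse (compact `T` with `T S = I + F`, `F` finite rank), then
`D₀ = [[0, div],[−∇, 0]]`, i.e. `D₀(u,v) = (−S*v, −Su)`, has closed range
`H = Ran(div) ⊕ Ran(∇)`, and the restriction of `D₀` to `H` has a compact inverse
`D₀⁻¹ : H → H`. -/
theorem gradient_block_operator_compact_inverse
    {H₁ H₂ : Type*} [NormedAddCommGroup H₁] [InnerProductSpace ℂ H₁] [CompleteSpace H₁]
    [NormedAddCommGroup H₂] [InnerProductSpace ℂ H₂] [CompleteSpace H₂]
    (S : H₁ →ₗ.[ℂ] H₂)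
    (hdense : Dense (S.domain : Set H₁))
    (hclosed : IsClosed (S.graph : Set (H₁ × H₂)))
    (hLF : ∃ (T : H₂ →L[ℂ] H₁) (F : H₁ →L[ℂ] H₁), IsCompactOperator (⇑T) ∧
      FiniteDimensional ℂ (LinearMap.range (F : H₁ →ₗ[ℂ] H₁)) ∧
      ∀ x : S.domain, T (S x) = (x : H₁) + F x) :
    IsClosed ((LinearMap.range S.toFun : Submodule ℂ H₂) : Set H₂) ∧
    IsClosed ((LinearMap.range (S.adjoint).toFun : Submodule ℂ H₁) : Set H₁) ∧
    ∃ R : H₁ × H₂ →L[ℂ] H₁ × H₂, IsCompactOperator (⇑R) ∧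
      ∀ (u : S.domain) (v : (S.adjoint).domain),
        (u : H₁) ∈ LinearMap.range (S.adjoint).toFun →
        (v : H₂) ∈ LinearMap.range S.toFun →
        R (-(S.adjoint v), -(S u)) = ((u : H₁), (v : H₂)) := by
  obtain ⟨T, F, hT, hF, hTS⟩ := hLF
  have hS : S.IsClosed := hclosed
  have hR := hS.isClosed_range_of_leftInverse_add_finiteRank T F hTS
  have : CompleteSpace (LinearMap.range S.toFun) := hR.completeSpace_coe
  obtain ⟨A, hA⟩ := hS.exists_isMoorePenroseInverse
  have hA_compact := hA.isCompactOperator hT F hTS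
  have hran := hA.range_adjoint_eq hdense
  refine ⟨hR, hran ▸ isClosed_orthogonal _,
    -((A ∘L ContinuousLinearMap.snd ℂ H₁ H₂).prod ((A†) ∘L ContinuousLinearMap.fst ℂ H₁ H₂)),
    ((hA_compact.comp_clm _).prodMk (hA_compact.adjoint.comp_clm _)).neg, fun u v hu hv => ?_⟩
  simp [hA.apply_eq (hran ▸ hu), hA.adjoint_apply_adjoint_apply hdense v hv]
end

section
/- Under the hypotheses of the Rellich identity (D₀ self-adjoint with closed range, N a self-adjoint involution anticommuting with D₀, B̃ bounded, accretive on Ran(D₀), with B̃* = NB̃N, D₀B̃ bisectorial with bounded H^∞ calculus on H₀ = Ran(D₀)): writing each h ∈ H₀ as h = (h_⊥, h_∥) with h_⊥ = N⁻h = (I−N)h/2 and h_∥ = N⁺h = (I+N)h/2, every h ∈ χ^±(D₀B̃)H₀ satisfies ‖h‖ ≲ ‖h_⊥‖ and ‖h‖ ≲ ‖h_∥‖. -/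
/-! Since `Re ⟪N h, B h⟫ = 0`, the accretivity bound `κ ‖h‖² ≤ Re ⟪h, B h⟫` equals both
`2 Re ⟪h_⊥, B h⟫` and `2 Re ⟪h_∥, B h⟫`; Cauchy–Schwarz and `‖B h‖ ≤ ‖B‖ ‖h‖` on either
one give the two bounds. -/

section RellichBounds

variable {𝕜 E : Type*} [RCLike 𝕜] [SeminormedAddCommGroup E] [InnerProductSpace 𝕜 E]

theorem re_inner_half_smul_sub_of_re_inner_eq_zero [Module ℝ E] [IsScalarTower ℝ 𝕜 E] {u v w : E}
    (hv : RCLike.re (inner 𝕜 v w) = 0) :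
    RCLike.re (inner 𝕜 u w) = 2 * RCLike.re (inner 𝕜 ((2 : ℝ)⁻¹ • (u - v)) w) := by
  rw [RCLike.real_smul_eq_coe_smul (K := 𝕜), inner_smul_real_left, inner_sub_left]
  simp only [map_sub, RCLike.smul_re, hv]
  ring

theorem re_inner_half_smul_add_of_re_inner_eq_zero [Module ℝ E] [IsScalarTower ℝ 𝕜 E] {u v w : E}
    (hv : RCLike.re (inner 𝕜 v w) = 0) :
    RCLike.re (inner 𝕜 u w) = 2 * RCLike.re (inner 𝕜 ((2 : ℝ)⁻¹ • (u + v)) w) := by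
  rw [RCLike.real_smul_eq_coe_smul (K := 𝕜), inner_smul_real_left, inner_add_left]
  simp only [map_add, RCLike.smul_re, hv]
  ring

theorem mul_norm_le_of_mul_sq_le_re_inner (B : E →L[𝕜] E) {c : ℝ} {h x : E}
    (hx : c * ‖h‖ ^ 2 ≤ RCLike.re (inner 𝕜 x (B h))) :
    c * ‖h‖ ≤ ‖B‖ * ‖x‖ := by
  rcases (norm_nonneg h).eq_or_lt with h0 | h0
  · rw [← h0, mul_zero]
    positivity
  refine le_of_mul_le_mul_right ?_ h0
  calc c * ‖h‖ * ‖h‖ = c * ‖h‖ ^ 2 := by ring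
    _ ≤ RCLike.re (inner 𝕜 x (B h)) := hx
    _ ≤ ‖x‖ * ‖B h‖ := re_inner_le_norm x (B h)
    _ ≤ ‖x‖ * (‖B‖ * ‖h‖) := by gcongr; exact B.le_opNorm h
    _ = ‖B‖ * ‖x‖ * ‖h‖ := by ring

end RellichBounds

theorem rellich_norm_bounds_general
    {H : Type*} [NormedAddCommGroup H] [InnerProductSpace ℂ H]
    (Nop : H →L[ℂ] H)
    (B : H →L[ℂ] H) (κ : ℝ)
    (h : H)
    (hacc : κ * ‖h‖ ^ 2 ≤ (inner ℂ (B h) h : ℂ).re)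
    (hrellich : (inner ℂ (Nop h) (B h) : ℂ) = 0) :
    κ * ‖h‖ ≤ 2 * ‖B‖ * ‖(2 : ℝ)⁻¹ • (h - Nop h)‖ ∧
    κ * ‖h‖ ≤ 2 * ‖B‖ * ‖(2 : ℝ)⁻¹ • (h + Nop h)‖ := by
  have hre : κ * ‖h‖ ^ 2 ≤ RCLike.re (inner ℂ h (B h)) := by
    rwa [inner_re_symm, RCLike.re_to_complex]
  have hN : RCLike.re (inner ℂ (Nop h) (B h)) = 0 := by rw [hrellich, map_zero]
  have bound (x : H) (hx : κ * ‖h‖ ^ 2 ≤ 2 * RCLike.re (inner ℂ x (B h))) :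
      κ * ‖h‖ ≤ 2 * ‖B‖ * ‖x‖ := by
    have := mul_norm_le_of_mul_sq_le_re_inner B (c := κ / 2) (h := h) (x := x) (by linarith)
    linarith
  exact ⟨bound _ (re_inner_half_smul_sub_of_re_inner_eq_zero hN ▸ hre),
    bound _ (re_inner_half_smul_add_of_re_inner_eq_zero hN ▸ hre)⟩

/-- Under the hypotheses of the Rellich identity (`N` a bounded self-adjoint
involution, `B̃` bounded, accretivity `Re⟨B̃h,h⟩ ≥ κ‖h‖²` at `h`, and the Rellich identity
`⟨Nh, B̃h⟩ = 0`, which holds for every `h ∈ χ^±(D₀B̃)H₀`), writing `h_⊥ = (I−N)h/2` and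
`h_∥ = (I+N)h/2`, one has `‖h‖ ≲ ‖h_⊥‖` and `‖h‖ ≲ ‖h_∥‖`, explicitly
`κ‖h‖ ≤ 2‖B̃‖‖h_⊥‖` and `κ‖h‖ ≤ 2‖B̃‖‖h_∥‖`. -/
theorem rellich_norm_bounds
    {H : Type*} [NormedAddCommGroup H] [InnerProductSpace ℂ H] [CompleteSpace H]
    (Nop : H →L[ℂ] H)
    (hNinv : Nop.comp Nop = ContinuousLinearMap.id ℂ H)
    (hNsa : ∀ x y : H, (inner ℂ (Nop x) y : ℂ) = inner ℂ x (Nop y))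
    (B : H →L[ℂ] H) (κ : ℝ) (hκ : 0 < κ)
    (h : H)
    (hacc : κ * ‖h‖ ^ 2 ≤ (inner ℂ (B h) h : ℂ).re)
    (hrellich : (inner ℂ (Nop h) (B h) : ℂ) = 0) :
    κ * ‖h‖ ≤ 2 * ‖B‖ * ‖(2 : ℝ)⁻¹ • (h - Nop h)‖ ∧
    κ * ‖h‖ ≤ 2 * ‖B‖ * ‖(2 : ℝ)⁻¹ • (h + Nop h)‖ :=
  rellich_norm_bounds_general Nop B κ h hacc hrellich
end
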